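/- arXiv:2212.09527 — 2 statements merged into one kernel-verified Lean document; each statement's English description precedes it below -/
import Mathlib

section
/- Let μ > 0, let c ≥ 1 and j, i be natural numbers with 1 ≤ j ≤ c-1 ≤ c ≤ i, and let A be a probability measure on [0,∞) with all transforms A*_r(s) = ∫ t^r e^{-st} dA(t) finite. Then the double integral p(i,j) = C(c, c-j)·(cμ)^{i-c+1}/(i-c)! · ∫_0^∞ ∫_0^t v^{i-c} e^{-μ(t-v)j} e^{-cμv} (1-e^{-μ(t-v)})^{c-j} dv dA(t) equals the alternative form C(c-1, c-j-1)·(cμ)^{i-c+2}/(i-c+1)! · ∫_0^∞ ∫_0^t e^{-μ(t-ν)j}(1-e^{-μ(t-ν)})^{c-j-1} ν^{i-c+1} e^{-cμν} dν dA(t). -/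
/-!
The identity holds already for the inner integrals, for every `t`. With `c = j + m + 1` and
`E v = exp (-μ (t - v))`, the function `v ^ (n + 1) E ^ j exp (-c μ v) (1 - E) ^ (m + 1)` vanishes
at `v = 0` and `v = t`, and its derivative is `(n + 1)` times the first integrand minus
`μ (m + 1)` times the second, because `(j - c) (1 - E) - (m + 1) E = -(m + 1)`. The remaining
constants match by `(m + 1) C(c, m + 1) = c C(c - 1, m)`.
-/

open Real MeasureTheory intervalIntegral

section IntegrationByParts

variable (μ t c j : ℝ) (n m : ℕ)

theorem hasDerivAt_pow_mul_exp_mul_one_sub_exp_pow (hc : c = j + m + 1) (v : ℝ) :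
    HasDerivAt
      (fun v => v ^ (n + 1) * (exp (-μ * (t - v) * j) * exp (-c * μ * v) *
        (1 - exp (-μ * (t - v))) ^ (m + 1)))
      ((n + 1) * (v ^ n * exp (-μ * (t - v) * j) * exp (-c * μ * v) *
          (1 - exp (-μ * (t - v))) ^ (m + 1)) -
        μ * (m + 1) * (exp (-μ * (t - v) * j) * (1 - exp (-μ * (t - v))) ^ m *
          v ^ (n + 1) * exp (-c * μ * v))) v := by
  have hlin : HasDerivAt (fun v => t - v) (-1) v := (hasDerivAt_id v).const_sub t
  have hj := ((hlin.const_mul (-μ)).mul_const j).exp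
  have hcμ := ((hasDerivAt_id v).const_mul (-c * μ)).exp
  have hE := ((hlin.const_mul (-μ)).exp.const_sub 1).pow (m + 1)
  refine ((hasDerivAt_pow (n + 1) v).mul ((hj.mul hcμ).mul hE)).congr_deriv ?_
  simp only [id, Pi.mul_apply, Pi.pow_apply, Nat.add_sub_cancel, Nat.cast_add, Nat.cast_one,
    pow_succ]
  rw [hc]
  ring

theorem integral_pow_mul_exp_mul_one_sub_exp_pow (hc : c = j + m + 1) :
    (n + 1) * ∫ v in (0:ℝ)..t, v ^ n * exp (-μ * (t - v) * j) * exp (-c * μ * v) *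
        (1 - exp (-μ * (t - v))) ^ (m + 1) =
      μ * (m + 1) * ∫ v in (0:ℝ)..t, exp (-μ * (t - v) * j) * (1 - exp (-μ * (t - v))) ^ m *
        v ^ (n + 1) * exp (-c * μ * v) := by
  have hftc := integral_eq_sub_of_hasDerivAt
    (fun v _ => hasDerivAt_pow_mul_exp_mul_one_sub_exp_pow μ t c j n m hc v)
    (Continuous.intervalIntegrable (by fun_prop) 0 t)
  rw [integral_sub (Continuous.intervalIntegrable (by fun_prop) 0 t)
      (Continuous.intervalIntegrable (by fun_prop) 0 t),
    intervalIntegral.integral_const_mul, intervalIntegral.integral_const_mul] at hftc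
  simp only [sub_self, mul_zero, exp_zero, zero_pow (Nat.succ_ne_zero _), zero_mul,
    sub_zero] at hftc
  linarith

end IntegrationByParts

theorem choose_mul_pow_div_factorial_mul_integral_eq (μ t : ℝ) (c j n m : ℕ)
    (hc : c = j + m + 1) :
    (c.choose (m + 1) : ℝ) * (c * μ) ^ (n + 1) / (n.factorial : ℝ) *
        ∫ v in (0:ℝ)..t, v ^ n * exp (-μ * (t - v) * j) * exp (-c * μ * v) *
          (1 - exp (-μ * (t - v))) ^ (m + 1) =
      ((c - 1).choose m : ℝ) * (c * μ) ^ (n + 1 + 1) / ((n + 1).factorial : ℝ) *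
        ∫ v in (0:ℝ)..t, exp (-μ * (t - v) * j) * (1 - exp (-μ * (t - v))) ^ m *
          v ^ (n + 1) * exp (-c * μ * v) := by
  have hchoose : ((m : ℝ) + 1) * c.choose (m + 1) = c * (c - 1).choose m := by
    have h := Nat.add_one_mul_choose_eq (c - 1) m
    rw [Nat.sub_add_cancel (by omega)] at h
    exact_mod_cast (mul_comm _ _).trans h.symm
  have hparts := integral_pow_mul_exp_mul_one_sub_exp_pow μ t c j n m (by exact_mod_cast hc)
  rw [Nat.factorial_succ, Nat.cast_mul, Nat.cast_succ, pow_succ _ (n + 1), div_mul_eq_mul_div,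
    div_mul_eq_mul_div, div_eq_div_iff (by positivity) (by positivity)]
  linear_combination (c * μ) ^ (n + 1) * n.factorial * (c.choose (m + 1) : ℝ) * hparts +
    (c * μ) ^ (n + 1) * n.factorial * μ * (∫ v in (0:ℝ)..t, exp (-μ * (t - v) * j) *
      (1 - exp (-μ * (t - v))) ^ m * v ^ (n + 1) * exp (-c * μ * v)) * hchoose

theorem stmt_13_general (μ : ℝ) (c j i : ℕ) (hc : 1 ≤ c)
    (hj2 : j ≤ c - 1)
    (A : Measure ℝ) :
    (c.choose (c - j) : ℝ) * (c * μ) ^ (i - c + 1) / ((i - c).factorial : ℝ) *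
        ∫ t, (∫ v in (0:ℝ)..t,
          v ^ (i - c) * Real.exp (-μ * (t - v) * j) * Real.exp (-c * μ * v) *
            (1 - Real.exp (-μ * (t - v))) ^ (c - j)) ∂A =
      ((c - 1).choose (c - j - 1) : ℝ) * (c * μ) ^ (i - c + 2) / ((i - c + 1).factorial : ℝ) *
        ∫ t, (∫ v in (0:ℝ)..t,
          Real.exp (-μ * (t - v) * j) * (1 - Real.exp (-μ * (t - v))) ^ (c - j - 1) *
            v ^ (i - c + 1) * Real.exp (-c * μ * v)) ∂A := by
  obtain ⟨m, hm⟩ : ∃ m, c - j = m + 1 := ⟨c - j - 1, by omega⟩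
  rw [show c - j - 1 = m by omega, hm, ← MeasureTheory.integral_const_mul,
    ← MeasureTheory.integral_const_mul]
  congr 1
  funext t
  exact choose_mul_pow_div_factorial_mul_integral_eq μ t c j (i - c) m (by omega)

theorem stmt_13 (μ : ℝ) (hμ : 0 < μ) (c j i : ℕ) (hc : 1 ≤ c) (hj1 : 1 ≤ j)
    (hj2 : j ≤ c - 1) (hi : c ≤ i)
    (A : Measure ℝ) [IsProbabilityMeasure A] (hsupp : A (Set.Iio 0) = 0)
    (hfin : ∀ (r : ℕ) (s : ℝ), 0 < s → Integrable (fun t => t ^ r * Real.exp (-s * t)) A) :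
    (c.choose (c - j) : ℝ) * (c * μ) ^ (i - c + 1) / ((i - c).factorial : ℝ) *
        ∫ t, (∫ v in (0:ℝ)..t,
          v ^ (i - c) * Real.exp (-μ * (t - v) * j) * Real.exp (-c * μ * v) *
            (1 - Real.exp (-μ * (t - v))) ^ (c - j)) ∂A =
      ((c - 1).choose (c - j - 1) : ℝ) * (c * μ) ^ (i - c + 2) / ((i - c + 1).factorial : ℝ) *
        ∫ t, (∫ v in (0:ℝ)..t,
          Real.exp (-μ * (t - v) * j) * (1 - Real.exp (-μ * (t - v))) ^ (c - j - 1) *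
            v ^ (i - c + 1) * Real.exp (-c * μ * v)) ∂A :=
  stmt_13_general μ c j i hc hj2 A
end

section
/- Let μ > 0, c ≥ 1, 1 ≤ j ≤ c-1, and c ≤ i. Let A be a probability measure on [0,∞) with A*(s) = ∫ e^{-st} dA(t) and A*_r(s) = ∫ t^r e^{-st} dA(t) all finite. Then C(c-1, c-j-1)·(cμ)^{i-c+2}/(i-c+1)! · ∫_0^∞ ∫_0^t e^{-μ(t-ν)j}(1-e^{-μ(t-ν)})^{c-j-1} ν^{i-c+1} e^{-cμν} dν dA(t) = Σ_{k=1}^{c-j} ((-1)^{c-j-k} (c-1)! / ((k-1)!(c-j-k)! j!)) · (c/k)^{i-c+2} · (A*((c-k)μ) - Σ_{r=0}^{i-c+1} (kμ)^r A*_r(cμ)/r!). -/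
/-!
Expanding `(1 - e^{-μ(t-v)})^{c-j-1}` binomially writes the inner integrand as a combination
of `e^{-(c-k)μt} · v^M e^{-kμv}` (`M = i-c+1`, `k = 1, …, c-j`). The truncated gamma integral
`∫₀ᵗ v^M e^{-av} dv = M!/a^{M+1} (1 - e^{-at} ∑_{r ≤ M} (at)^r/r!)` then leaves only terms
`e^{-(c-k)μt}` and `t^r e^{-cμt}`, whose `A`-integrals are `A*((c-k)μ)` and `A*_r(cμ)`.
Finally `C(c-1, c-j-1) C(c-j-1, c-j-k) = (c-1)!/((k-1)! (c-j-k)! j!)`.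
-/

open Real MeasureTheory Finset intervalIntegral

theorem hasDerivAt_sum_pow_div_factorial (m : ℕ) (y : ℝ) :
    HasDerivAt (fun y : ℝ => ∑ r ∈ range (m + 1), y ^ r / r.factorial)
      (∑ r ∈ range m, y ^ r / r.factorial) y := by
  have h := HasDerivAt.fun_sum (u := range (m + 1))
    (fun r _ => (hasDerivAt_pow r y).div_const (r.factorial : ℝ))
  refine h.congr_deriv ?_
  rw [sum_range_succ']
  simp only [CharP.cast_eq_zero, zero_mul, zero_div, add_zero]
  refine sum_congr rfl fun r _ => ?_
  rw [Nat.factorial_succ, Nat.cast_mul, Nat.add_sub_cancel]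
  have : (r.factorial : ℝ) ≠ 0 := by positivity
  field_simp

theorem integral_pow_mul_exp_neg_mul {a : ℝ} (ha : a ≠ 0) (m : ℕ) (t : ℝ) :
    ∫ v in (0 : ℝ)..t, v ^ m * exp (-(a * v)) =
      m.factorial / a ^ (m + 1) *
        (1 - exp (-(a * t)) * ∑ r ∈ range (m + 1), (a * t) ^ r / r.factorial) := by
  set S : ℝ → ℝ := fun y => ∑ r ∈ range (m + 1), y ^ r / r.factorial
  have hS0 : S 0 = 1 := by simp [S, sum_range_succ']
  have hderiv : ∀ x, HasDerivAt
      (fun x => -(m.factorial / a ^ (m + 1)) * (exp (-(a * x)) * S (a * x)))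
      (x ^ m * exp (-(a * x))) x := by
    intro x
    have he : HasDerivAt (fun x => exp (-(a * x))) (exp (-(a * x)) * -a) x := by
      simpa using ((hasDerivAt_id x).const_mul a).neg.exp
    have hS : HasDerivAt (fun x => S (a * x))
        ((∑ r ∈ range m, (a * x) ^ r / r.factorial) * a) x :=
      (hasDerivAt_sum_pow_div_factorial m (a * x)).comp x
        (by simpa using (hasDerivAt_id x).const_mul a)
    refine ((he.mul hS).const_mul _).congr_deriv ?_
    simp only [S, sum_range_succ _ m]
    have : (m.factorial : ℝ) ≠ 0 := by positivity
    field_simp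
    ring
  rw [integral_eq_sub_of_hasDerivAt (fun x _ => hderiv x)
    (by apply Continuous.intervalIntegrable; fun_prop)]
  simp only [mul_zero, neg_zero, exp_zero, hS0, S]
  ring

theorem pow_mul_one_sub_pow_eq_sum {R : Type*} [CommRing R] (x : R) {j c : ℕ}
    (hjc : j + 1 ≤ c) :
    x ^ j * (1 - x) ^ (c - j - 1) =
      ∑ k ∈ Icc 1 (c - j),
        (-1) ^ (c - j - k) * ((c - j - 1).choose (c - j - k) : R) * x ^ (c - k) := by
  rw [sub_eq_neg_add, add_pow, mul_sum]
  refine sum_nbij' (fun m => c - j - m) (fun k => c - j - k) (fun m hm => ?_) (fun k hk => ?_)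
    (fun m hm => ?_) (fun k hk => ?_) (fun m hm => ?_) <;> simp only [mem_range, mem_Icc] at *
  iterate 4 omega
  rw [one_pow, mul_one, neg_pow, (by omega : c - j - (c - j - m) = m),
    (by omega : c - (c - j - m) = j + m), pow_add]
  ring

theorem exp_mul_one_sub_exp_pow_eq_sum (μ t v : ℝ) {c j : ℕ} (hjc : j + 1 ≤ c) :
    exp (-μ * (t - v) * j) * (1 - exp (-μ * (t - v))) ^ (c - j - 1) * exp (-c * μ * v) =
      ∑ k ∈ Icc 1 (c - j), (-1) ^ (c - j - k) * ((c - j - 1).choose (c - j - k) : ℝ) *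
        exp (-((c : ℝ) - k) * μ * t) * exp (-(k * μ * v)) := by
  rw [mul_comm _ (j : ℝ), exp_nat_mul, pow_mul_one_sub_pow_eq_sum _ hjc, sum_mul]
  refine sum_congr rfl fun k hk => ?_
  rw [mem_Icc] at hk
  rw [← exp_nat_mul, mul_assoc, ← exp_add, mul_assoc _ (exp _) (exp _), ← exp_add,
    Nat.cast_sub (by omega)]
  ring_nf

theorem integral_exp_mul_one_sub_exp_pow_mul_pow_mul_exp {μ : ℝ} (hμ : μ ≠ 0) (t : ℝ)
    {c j : ℕ} (hjc : j + 1 ≤ c) (M : ℕ) :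
    ∫ v in (0 : ℝ)..t, exp (-μ * (t - v) * j) * (1 - exp (-μ * (t - v))) ^ (c - j - 1) *
        v ^ M * exp (-c * μ * v) =
      ∑ k ∈ Icc 1 (c - j), (-1) ^ (c - j - k) * ((c - j - 1).choose (c - j - k) : ℝ) *
        (M.factorial / (k * μ) ^ (M + 1)) *
        (exp (-((c : ℝ) - k) * μ * t) -
          ∑ r ∈ range (M + 1),
            (k * μ) ^ r * (t ^ r * exp (-(c : ℝ) * μ * t)) / r.factorial) := by
  have hexpand : ∀ v, exp (-μ * (t - v) * j) * (1 - exp (-μ * (t - v))) ^ (c - j - 1) *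
      v ^ M * exp (-c * μ * v) =
      ∑ k ∈ Icc 1 (c - j), (-1) ^ (c - j - k) * ((c - j - 1).choose (c - j - k) : ℝ) *
        exp (-((c : ℝ) - k) * μ * t) * (v ^ M * exp (-(k * μ * v))) := by
    intro v
    rw [mul_right_comm _ (v ^ M), exp_mul_one_sub_exp_pow_eq_sum μ t v hjc, sum_mul]
    exact sum_congr rfl fun k _ => by ring
  simp_rw [hexpand]
  rw [intervalIntegral.integral_finsetSum fun k _ => by
    apply Continuous.intervalIntegrable; fun_prop]
  refine sum_congr rfl fun k hk => ?_
  have hkμ : (k : ℝ) * μ ≠ 0 :=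
    mul_ne_zero (Nat.cast_ne_zero.2 (by rw [mem_Icc] at hk; omega)) hμ
  have hshift : exp (-((c : ℝ) - k) * μ * t) *
      (1 - exp (-(k * μ * t)) * ∑ r ∈ range (M + 1), (k * μ * t) ^ r / r.factorial) =
      exp (-((c : ℝ) - k) * μ * t) -
        ∑ r ∈ range (M + 1),
          (k * μ) ^ r * (t ^ r * exp (-(c : ℝ) * μ * t)) / r.factorial := by
    rw [mul_sub, mul_one, ← mul_assoc, ← exp_add, mul_sum]
    congr 1
    refine sum_congr rfl fun r _ => ?_
    rw [mul_pow]
    ring_nf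
  rw [intervalIntegral.integral_const_mul, integral_pow_mul_exp_neg_mul hkμ, ← hshift]
  ring

theorem cast_choose_mul_choose {c j k : ℕ} (hjc : j + 1 ≤ c) (hk : k ∈ Icc 1 (c - j)) :
    ((c - 1).choose (c - j - 1) : ℝ) * ((c - j - 1).choose (c - j - k) : ℝ) =
      (c - 1).factorial / ((k - 1).factorial * (c - j - k).factorial * j.factorial) := by
  rw [mem_Icc] at hk
  rw [Nat.cast_choose ℝ (by omega : c - j - 1 ≤ c - 1),
    Nat.cast_choose ℝ (by omega : c - j - k ≤ c - j - 1),
    (by omega : c - 1 - (c - j - 1) = j), (by omega : c - j - 1 - (c - j - k) = k - 1)]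
  field_simp

theorem integrable_pow_mul_exp_neg_mul_mul {A : Measure ℝ}
    (hfin : ∀ (r : ℕ) (s : ℝ), 0 < s → Integrable (fun t => t ^ r * exp (-s * t)) A)
    {μ s : ℝ} (hμ : 0 < μ) (hs : 0 < s) (r : ℕ) :
    Integrable (fun t => t ^ r * exp (-s * μ * t)) A := by
  have h := hfin r _ (mul_pos hs hμ)
  simp only [neg_mul, mul_assoc] at h ⊢
  exact h

theorem integrable_exp_sub_sum_pow_mul_exp {A : Measure ℝ}
    (hfin : ∀ (r : ℕ) (s : ℝ), 0 < s → Integrable (fun t => t ^ r * exp (-s * t)) A)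
    {μ s s' : ℝ} (hμ : 0 < μ) (hs : 0 < s) (hs' : 0 < s') (b : ℕ → ℝ) (M : ℕ) :
    Integrable (fun t => exp (-s' * μ * t) -
      ∑ r ∈ range (M + 1), b r * (t ^ r * exp (-s * μ * t)) / r.factorial) A := by
  refine .sub ?_ (integrable_finsetSum _ fun r _ =>
    ((integrable_pow_mul_exp_neg_mul_mul hfin hμ hs r).const_mul _).div_const _)
  simpa using integrable_pow_mul_exp_neg_mul_mul hfin hμ hs' 0

theorem integral_exp_sub_sum_pow_mul_exp {A : Measure ℝ}
    (hfin : ∀ (r : ℕ) (s : ℝ), 0 < s → Integrable (fun t => t ^ r * exp (-s * t)) A)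
    {μ s s' : ℝ} (hμ : 0 < μ) (hs : 0 < s) (hs' : 0 < s') (b : ℕ → ℝ) (M : ℕ) :
    ∫ t, (exp (-s' * μ * t) -
      ∑ r ∈ range (M + 1), b r * (t ^ r * exp (-s * μ * t)) / r.factorial) ∂A =
      (∫ t, exp (-s' * μ * t) ∂A) -
        ∑ r ∈ range (M + 1), b r * (∫ t, t ^ r * exp (-s * μ * t) ∂A) / r.factorial := by
  have hmom := integrable_pow_mul_exp_neg_mul_mul hfin hμ hs
  rw [integral_sub (by simpa using integrable_pow_mul_exp_neg_mul_mul hfin hμ hs' 0)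
      (integrable_finsetSum _ fun r _ => ((hmom r).const_mul _).div_const _),
    integral_finsetSum _ fun r _ => ((hmom r).const_mul _).div_const _]
  simp_rw [MeasureTheory.integral_div, MeasureTheory.integral_const_mul]

theorem stmt_14_general (μ : ℝ) (hμ : 0 < μ) (c j i : ℕ) (hj1 : 1 ≤ j)
    (hj2 : j ≤ c - 1)
    (A : Measure ℝ)
    (hfin : ∀ (r : ℕ) (s : ℝ), 0 < s → Integrable (fun t => t ^ r * Real.exp (-s * t)) A) :
    ((c - 1).choose (c - j - 1) : ℝ) * (c * μ) ^ (i - c + 2) / ((i - c + 1).factorial : ℝ) *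
        ∫ t, (∫ v in (0:ℝ)..t,
          Real.exp (-μ * (t - v) * j) * (1 - Real.exp (-μ * (t - v))) ^ (c - j - 1) *
            v ^ (i - c + 1) * Real.exp (-c * μ * v)) ∂A =
      ∑ k ∈ Finset.Icc 1 (c - j),
        (-1 : ℝ) ^ (c - j - k) * ((c - 1).factorial : ℝ) /
            (((k - 1).factorial : ℝ) * ((c - j - k).factorial : ℝ) * (j.factorial : ℝ)) *
          ((c : ℝ) / k) ^ (i - c + 2) *
          ((∫ t, Real.exp (-((c : ℝ) - k) * μ * t) ∂A) -
            ∑ r ∈ Finset.range (i - c + 2),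
              ((k : ℝ) * μ) ^ r * (∫ t, t ^ r * Real.exp (-(c : ℝ) * μ * t) ∂A) /
                (r.factorial : ℝ)) := by
  have hjc : j + 1 ≤ c := by omega
  have hc : (0 : ℝ) < c := by exact_mod_cast (by omega : 0 < c)
  have hck : ∀ k ∈ Icc 1 (c - j), (0 : ℝ) < c - k := fun k hk => by
    rw [mem_Icc] at hk
    exact sub_pos.2 (by exact_mod_cast (by omega : k < c))
  set M := i - c + 1
  rw [show i - c + 2 = M + 1 from rfl]
  simp_rw [integral_exp_mul_one_sub_exp_pow_mul_pow_mul_exp hμ.ne' _ hjc M]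
  rw [integral_finsetSum _ fun k hk =>
    (integrable_exp_sub_sum_pow_mul_exp hfin hμ hc (hck k hk) _ M).const_mul _, mul_sum]
  refine sum_congr rfl fun k hk => ?_
  have hk0 : (k : ℝ) ≠ 0 := Nat.cast_ne_zero.2 (by rw [mem_Icc] at hk; omega)
  rw [MeasureTheory.integral_const_mul, integral_exp_sub_sum_pow_mul_exp hfin hμ hc (hck k hk),
    mul_div_assoc ((-1 : ℝ) ^ (c - j - k)), ← cast_choose_mul_choose hjc hk,
    div_pow, mul_pow, mul_pow]
  field_simp

theorem stmt_14 (μ : ℝ) (hμ : 0 < μ) (c j i : ℕ) (hc : 1 ≤ c) (hj1 : 1 ≤ j)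
    (hj2 : j ≤ c - 1) (hi : c ≤ i)
    (A : Measure ℝ) [IsProbabilityMeasure A] (hsupp : A (Set.Iio 0) = 0)
    (hfin : ∀ (r : ℕ) (s : ℝ), 0 < s → Integrable (fun t => t ^ r * Real.exp (-s * t)) A) :
    ((c - 1).choose (c - j - 1) : ℝ) * (c * μ) ^ (i - c + 2) / ((i - c + 1).factorial : ℝ) *
        ∫ t, (∫ v in (0:ℝ)..t,
          Real.exp (-μ * (t - v) * j) * (1 - Real.exp (-μ * (t - v))) ^ (c - j - 1) *
            v ^ (i - c + 1) * Real.exp (-c * μ * v)) ∂A =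
      ∑ k ∈ Finset.Icc 1 (c - j),
        (-1 : ℝ) ^ (c - j - k) * ((c - 1).factorial : ℝ) /
            (((k - 1).factorial : ℝ) * ((c - j - k).factorial : ℝ) * (j.factorial : ℝ)) *
          ((c : ℝ) / k) ^ (i - c + 2) *
          ((∫ t, Real.exp (-((c : ℝ) - k) * μ * t) ∂A) -
            ∑ r ∈ Finset.range (i - c + 2),
              ((k : ℝ) * μ) ^ r * (∫ t, t ^ r * Real.exp (-(c : ℝ) * μ * t) ∂A) /
                (r.factorial : ℝ)) :=
  stmt_14_general μ hμ c j i hj1 hj2 A hfin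
end
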